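/- arXiv:2402.09002 — 4 statements merged into one kernel-verified Lean document; each statement's English description precedes it below -/
import Mathlib

section
/- Let k ≥ 1, let m : ℝ → ℝ^(2k) be the moment curve m(t) = (t, t², …, t^(2k)), and let P, Q ⊂ ℝ be disjoint (k+1)-element sets that do NOT alternate. Then there exists an affine hyperplane in ℝ^(2k) strictly separating conv(m(P)) from conv(m(Q)); in particular conv(m(P)) ∩ conv(m(Q)) = ∅. -/
/-!
Sort `P ∪ Q` as `w₀ < ⋯ < w_{2k+1}` and put a root midway between any two consecutive points
lying in different sets. Up to sign, the product of these linear factors is negative on `P` and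
positive on `Q`, and it has degree at most `2k` because `P` and `Q` do not alternate, so that some
two consecutive points lie in the same set. A polynomial `p` of degree at most `2k` is an affine
function of the moment curve, `p(t) = p₀ + ∑ pᵢ tⁱ`, so `{x | p₀ + ∑ pᵢ xᵢ = 0}` is the separating
hyperplane.
-/

/-- The moment curve `t ↦ (t, t², …, t^d)` in `ℝ^d`. -/
def moment (d : ℕ) : ℝ → (Fin d → ℝ) := fun t i => t ^ ((i : ℕ) + 1)

/-- Two finite subsets `P = {s₁ < s₂ < … < s_p}` and `Q = {t₁ < t₂ < … < t_p}` of a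
linear order alternate if either `s₁ < t₁ < s₂ < t₂ < … < s_p < t_p` or
`t₁ < s₁ < t₂ < s₂ < … < t_p < s_p`. -/
def Alternates {α : Type*} [LinearOrder α] (P Q : Finset α) : Prop :=
  ∃ (p : ℕ) (f g : Fin p → α), StrictMono f ∧ StrictMono g ∧
    Set.range f = (P : Set α) ∧ Set.range g = (Q : Set α) ∧
    (((∀ i : Fin p, f i < g i) ∧ ∀ i j : Fin p, (i : ℕ) + 1 = (j : ℕ) → g i < f j) ∨
      ((∀ i : Fin p, g i < f i) ∧ ∀ i j : Fin p, (i : ℕ) + 1 = (j : ℕ) → f i < g j))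

open Finset Polynomial

lemma sum_coeff_mul_moment {d : ℕ} {p : ℝ[X]} (hp : p.natDegree ≤ d) (t : ℝ) :
    ∑ i : Fin d, p.coeff (i + 1) * moment d t i = p.eval t - p.coeff 0 := by
  rw [eval_eq_sum_range' (Nat.lt_succ_of_le hp), sum_range_succ', ← Fin.sum_univ_eq_sum_range
    (fun i => p.coeff (i + 1) * t ^ (i + 1))]
  simp [moment]

lemma convexHull_moment_strictly_separated_of_eval {d : ℕ} (S T : Set ℝ) (p : ℝ[X])
    (hp : p.natDegree ≤ d) (hS : ∀ t ∈ S, p.eval t < 0) (hT : ∀ t ∈ T, 0 < p.eval t) :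
    (∀ x ∈ convexHull ℝ (moment d '' S), ∑ i : Fin d, p.coeff (i + 1) * x i < -p.coeff 0) ∧
      ∀ y ∈ convexHull ℝ (moment d '' T), -p.coeff 0 < ∑ i : Fin d, p.coeff (i + 1) * y i := by
  have hlin : IsLinearMap ℝ fun x : Fin d → ℝ => ∑ i : Fin d, p.coeff (i + 1) * x i :=
    ⟨fun x y => dotProduct_add _ x y, fun c x => dotProduct_smul c _ x⟩
  refine ⟨fun x hx => convexHull_min ?_ (convex_halfSpace_lt hlin _) hx,
    fun y hy => convexHull_min ?_ (convex_halfSpace_gt hlin _) hy⟩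
  · rintro _ ⟨t, ht, rfl⟩
    show (_ : ℝ) < _
    linarith [sum_coeff_mul_moment hp t, hS t ht]
  · rintro _ ⟨t, ht, rfl⟩
    show (_ : ℝ) < _
    linarith [sum_coeff_mul_moment hp t, hT t ht]

lemma neg_one_pow_card_filter_mul_prod_sub_pos {ι : Type*} (s : Finset ι) (z : ι → ℝ) {x : ℝ}
    (hx : ∀ i ∈ s, z i ≠ x) :
    0 < (-1) ^ #{i ∈ s | x < z i} * ∏ i ∈ s, (x - z i) := by
  rw [← prod_filter_mul_prod_filter_not s (fun i => x < z i), ← mul_assoc, ← prod_neg]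
  refine mul_pos (prod_pos fun i hi => ?_) (prod_pos fun i hi => ?_)
  · simp only [mem_filter] at hi
    linarith [hi.2]
  · simp only [mem_filter, not_lt] at hi
    exact sub_pos.2 (lt_of_le_of_ne hi.2 (hx i hi.1))

noncomputable def signChanges {m : ℕ} (σ : Fin (m + 1) → ℝ) : Finset (Fin m) :=
  {i | σ i.castSucc ≠ σ i.succ}

lemma neg_one_pow_card_signChanges_above {m : ℕ} {σ : Fin (m + 1) → ℝ}
    (hσ : ∀ j, σ j = 1 ∨ σ j = -1) (j : Fin (m + 1)) :
    (-1 : ℝ) ^ #{i ∈ signChanges σ | j ≤ i.castSucc} = σ j * σ (Fin.last m) := by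
  induction j using Fin.reverseInduction with
  | last =>
    have hempty : {i ∈ signChanges σ | Fin.last m ≤ i.castSucc} = ∅ :=
      filter_false_of_mem fun i _ => not_le.2 (Fin.castSucc_lt_last i)
    rw [hempty, card_empty, pow_zero]
    rcases hσ (Fin.last m) with h | h <;> rw [h] <;> norm_num
  | cast i₀ ih =>
    have hsucc : {i ∈ signChanges σ | i₀.succ ≤ i.castSucc} = {i ∈ signChanges σ | i₀ < i} := by
      simp only [Fin.succ_le_castSucc_iff]
    have hcast :
        {i ∈ signChanges σ | i₀.castSucc ≤ i.castSucc} = {i ∈ signChanges σ | i₀ ≤ i} := by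
      simp only [Fin.castSucc_le_castSucc_iff]
    rw [hsucc] at ih
    rw [hcast]
    by_cases hi₀ : i₀ ∈ signChanges σ
    · have hins : {i ∈ signChanges σ | i₀ ≤ i} = insert i₀ {i ∈ signChanges σ | i₀ < i} := by
        ext i; simp only [mem_filter, mem_insert, le_iff_eq_or_lt]; grind
      have hflip : σ i₀.castSucc = -σ i₀.succ := by
        have hne : σ i₀.castSucc ≠ σ i₀.succ := by simpa [signChanges] using hi₀
        rcases hσ i₀.castSucc with h | h <;> rcases hσ i₀.succ with h' | h' <;> simp_all
      rw [hins, card_insert_of_notMem (by simp), pow_succ, ih, hflip]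
      ring
    · have heq : {i ∈ signChanges σ | i₀ ≤ i} = {i ∈ signChanges σ | i₀ < i} := by
        ext i; simp only [mem_filter, le_iff_eq_or_lt]; grind
      have hsame : σ i₀.castSucc = σ i₀.succ := by simpa [signChanges] using hi₀
      rw [heq, ih, hsame]

lemma exists_polynomial_natDegree_le_card_signChanges {m : ℕ} {w : Fin (m + 1) → ℝ}
    (hw : StrictMono w) {σ : Fin (m + 1) → ℝ} (hσ : ∀ j, σ j = 1 ∨ σ j = -1) :
    ∃ p : ℝ[X], p.natDegree ≤ #(signChanges σ) ∧ ∀ j, 0 < σ j * p.eval (w j) := by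
  set z : Fin m → ℝ := fun i => (w i.castSucc + w i.succ) / 2
  have hlt : ∀ i j, j ≤ i.castSucc → w j < z i := fun i j hj => by
    have := hw (Fin.castSucc_lt_succ (i := i))
    have := hw.monotone hj
    simp only [z]
    linarith
  have hgt : ∀ i j, i.castSucc < j → z i < w j := fun i j hj => by
    have := hw (Fin.castSucc_lt_succ (i := i))
    have := hw.monotone (Fin.castSucc_lt_iff_succ_le.1 hj)
    simp only [z]
    linarith
  refine ⟨C (σ (Fin.last m)) * ∏ i ∈ signChanges σ, (X - C (z i)), ?_, fun j => ?_⟩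
  · refine (natDegree_C_mul_le _ _).trans ?_
    rw [natDegree_prod_of_monic _ _ fun i _ => monic_X_sub_C (z i)]
    simp
  · have hpos := neg_one_pow_card_filter_mul_prod_sub_pos (signChanges σ) z (x := w j)
      fun i _ => by
        rcases le_or_gt j i.castSucc with h | h
        · exact (hlt i j h).ne'
        · exact (hgt i j h).ne
    rw [filter_congr fun i _ => ⟨fun h => not_lt.1 fun h' => (hgt i j h').not_gt h, hlt i j⟩,
      neg_one_pow_card_signChanges_above hσ j] at hpos
    simpa [eval_prod, mul_assoc] using hpos

section
variable {α : Type*} [LinearOrder α] {P Q : Finset α}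

lemma Alternates.symm (h : Alternates P Q) : Alternates Q P := by
  obtain ⟨p, f, g, hf, hg, hfP, hgQ, h | h⟩ := h
  · exact ⟨p, g, f, hg, hf, hgQ, hfP, Or.inr h⟩
  · exact ⟨p, g, f, hg, hf, hgQ, hfP, Or.inl h⟩

lemma alternates_of_mem_iff_even (hPQ : Disjoint P Q) {k : ℕ} {w : Fin (2 * k) → α}
    (hw : StrictMono w) (hrange : Set.range w = ↑(P ∪ Q)) (hpar : ∀ j, w j ∈ P ↔ Even (j : ℕ)) :
    Alternates P Q := by
  have hmem : ∀ j, w j ∈ P ∪ Q := fun j => by rw [← mem_coe, ← hrange]; exact ⟨j, rfl⟩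
  refine ⟨k, fun i => w ⟨2 * i, by omega⟩, fun i => w ⟨2 * i + 1, by omega⟩,
    fun i i' h => hw (Fin.mk_lt_mk.2 (by have : (i : ℕ) < i' := h; omega)),
    fun i i' h => hw (Fin.mk_lt_mk.2 (by have : (i : ℕ) < i' := h; omega)), ?_, ?_,
    Or.inl ⟨fun i => hw (Fin.mk_lt_mk.2 (by omega)),
      fun i i' h => hw (Fin.mk_lt_mk.2 (by omega))⟩⟩
  · ext a
    constructor
    · rintro ⟨i, rfl⟩
      exact (hpar _).2 (even_two_mul _)
    · intro ha
      obtain ⟨j, rfl⟩ : a ∈ Set.range w := hrange ▸ mem_coe.2 (mem_union_left Q ha)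
      obtain ⟨i, hi⟩ := (hpar j).1 ha
      exact ⟨⟨i, by omega⟩, congrArg w (Fin.ext (by simp; omega))⟩
  · ext a
    constructor
    · rintro ⟨i, rfl⟩
      refine (mem_union.1 (hmem _)).resolve_left fun h => ?_
      exact Nat.not_even_two_mul_add_one i ((hpar _).1 h)
    · intro ha
      obtain ⟨j, rfl⟩ : a ∈ Set.range w := hrange ▸ mem_coe.2 (mem_union_right P ha)
      obtain ⟨i, hi⟩ := Nat.not_even_iff_odd.1 fun h => disjoint_right.1 hPQ ha ((hpar j).2 h)
      exact ⟨⟨i, by omega⟩, congrArg w (Fin.ext (by simp; omega))⟩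

lemma alternates_of_forall_mem_iff_not_mem (hPQ : Disjoint P Q) {k : ℕ}
    {w : Fin (2 * k + 2) → α} (hw : StrictMono w) (hrange : Set.range w = ↑(P ∪ Q))
    (hne : ∀ i : Fin (2 * k + 1), w i.castSucc ∈ P ↔ w i.succ ∉ P) :
    Alternates P Q := by
  have hpar : ∀ j : Fin (2 * k + 2), w j ∈ P ↔ (w 0 ∈ P ↔ Even (j : ℕ)) := by
    intro j
    induction j using Fin.induction with
    | zero => simp
    | succ i ih =>
      rw [Fin.val_succ, Nat.even_add_one, ← Fin.val_castSucc]
      have := hne i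
      tauto
  by_cases h0 : w 0 ∈ P
  · exact alternates_of_mem_iff_even (k := k + 1) hPQ hw hrange fun j => by
      simpa [h0] using hpar j
  · refine (alternates_of_mem_iff_even (k := k + 1) hPQ.symm hw (by rw [hrange, union_comm])
      fun j => ?_).symm
    have hj : w j ∈ P ∪ Q := by rw [← mem_coe, ← hrange]; exact ⟨j, rfl⟩
    have := hpar j
    have : w j ∈ P → w j ∉ Q := fun h => disjoint_left.1 hPQ h
    rw [mem_union] at hj
    tauto
end

lemma ne_zero_of_strictly_separates {ι : Type*} [Fintype ι] {S T : Set (ι → ℝ)} (hS : S.Nonempty)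
    (hT : T.Nonempty) {n : ι → ℝ} {c : ℝ} (hlt : ∀ x ∈ S, ∑ i, n i * x i < c)
    (hgt : ∀ y ∈ T, c < ∑ i, n i * y i) : n ≠ 0 := by
  rintro rfl
  obtain ⟨x, hx⟩ := hS
  obtain ⟨y, hy⟩ := hT
  have := hlt x hx
  have := hgt y hy
  simp only [Pi.zero_apply, zero_mul, sum_const_zero] at *
  linarith

theorem stmt10_general (k : ℕ) (P Q : Finset ℝ) (hPQ : Disjoint P Q)
    (hP : P.card = k + 1) (hQ : Q.card = k + 1) (halt : ¬ Alternates P Q) :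
    (∃ (n : Fin (2 * k) → ℝ) (c : ℝ), n ≠ 0 ∧
      (∀ x ∈ convexHull ℝ (moment (2 * k) '' (P : Set ℝ)), ∑ i, n i * x i < c) ∧
      (∀ y ∈ convexHull ℝ (moment (2 * k) '' (Q : Set ℝ)), c < ∑ i, n i * y i)) ∧
    convexHull ℝ (moment (2 * k) '' (P : Set ℝ)) ∩
      convexHull ℝ (moment (2 * k) '' (Q : Set ℝ)) = ∅ := by
  have hcard : #(P ∪ Q) = 2 * k + 2 := by rw [card_union_of_disjoint hPQ, hP, hQ]; ring
  set w := (P ∪ Q).orderEmbOfFin hcard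
  have hrange : Set.range w = ↑(P ∪ Q) := range_orderEmbOfFin _ _
  set σ : Fin (2 * k + 2) → ℝ := fun j => if w j ∈ P then -1 else 1
  obtain ⟨p, hdeg, hsign⟩ :=
      exists_polynomial_natDegree_le_card_signChanges w.strictMono (σ := σ) fun j => by
    by_cases h : w j ∈ P <;> simp [σ, h]
  have hchanges : #(signChanges σ) ≤ 2 * k := by
    obtain ⟨i₀, hi₀⟩ : ∃ i₀, i₀ ∉ signChanges σ := by
      by_contra! h
      refine halt (alternates_of_forall_mem_iff_not_mem hPQ w.strictMono hrange fun i => ?_)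
      have := h i
      simp only [signChanges, mem_filter, mem_univ, true_and, σ] at this
      split_ifs at this <;> simp_all
    simpa using card_lt_univ_of_notMem hi₀
  have hneg : ∀ t ∈ (P : Set ℝ), p.eval t < 0 := fun t ht => by
    obtain ⟨j, rfl⟩ : t ∈ Set.range w := hrange ▸ mem_coe.2 (mem_union_left Q ht)
    have := hsign j
    simp only [σ, if_pos (mem_coe.1 ht)] at this
    linarith
  have hpos : ∀ t ∈ (Q : Set ℝ), 0 < p.eval t := fun t ht => by
    obtain ⟨j, rfl⟩ : t ∈ Set.range w := hrange ▸ mem_coe.2 (mem_union_right P ht)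
    have := hsign j
    simp only [σ, if_neg (disjoint_right.1 hPQ ht)] at this
    linarith
  have hhull {S : Finset ℝ} (hS : #S = k + 1) :
      (convexHull ℝ (moment (2 * k) '' S)).Nonempty :=
    ((coe_nonempty.2 (card_pos.1 (by omega))).image _).convexHull
  obtain ⟨hlt, hgt⟩ :=
    convexHull_moment_strictly_separated_of_eval _ _ p (hdeg.trans hchanges) hneg hpos
  exact ⟨⟨_, _, ne_zero_of_strictly_separates (hhull hP) (hhull hQ) hlt hgt, hlt, hgt⟩,
    Set.eq_empty_of_forall_notMem fun x hx => (hlt x hx.1).not_gt (hgt x hx.2)⟩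

theorem stmt10 (k : ℕ) (hk : 1 ≤ k) (P Q : Finset ℝ) (hPQ : Disjoint P Q)
    (hP : P.card = k + 1) (hQ : Q.card = k + 1) (halt : ¬ Alternates P Q) :
    (∃ (n : Fin (2 * k) → ℝ) (c : ℝ), n ≠ 0 ∧
      (∀ x ∈ convexHull ℝ (moment (2 * k) '' (P : Set ℝ)), ∑ i, n i * x i < c) ∧
      (∀ y ∈ convexHull ℝ (moment (2 * k) '' (Q : Set ℝ)), c < ∑ i, n i * y i)) ∧
    convexHull ℝ (moment (2 * k) '' (P : Set ℝ)) ∩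
      convexHull ℝ (moment (2 * k) '' (Q : Set ℝ)) = ∅ :=
  stmt10_general k P Q hPQ hP hQ halt
end

section
/- Let k ≥ 1 and let I be any (k+1)-element subset of {1, 2, …, 2k+3}. Then the number of (k+1)-element subsets J of {1, 2, …, 2k+3} \ I that alternate with I is even. -/
def good (m δ : ℕ) (I : Finset ℕ) : Prop :=
  ∀ n ∈ I, (n < m → n % 2 ≠ δ) ∧ (m < n → n % 2 = δ)

instance good.dec (m δ : ℕ) (I : Finset ℕ) : Decidable (good m δ I) := by
  unfold good; infer_instance

lemma constructAlt (k m δ : ℕ) (I : Finset ℕ) (hI : I ⊆ Finset.Icc 1 (2*k+3))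
    (hIcard : I.card = k+1) (hm : m ∈ Finset.Icc 1 (2*k+3)) (hmI : m ∉ I)
    (hδ : δ ≤ 1) (hg : good m δ I) :
    Alternates I ((Finset.Icc 1 (2*k+3) \ I).erase m) := by
  classical
  set v : ℕ → ℕ := fun j => if j + 1 < m then j + 1 else j + 2 with hv
  have hvmono : ∀ {j j' : ℕ}, j < j' → v j < v j' := by
    intro j j' h; simp only [hv]; split_ifs <;> omega
  have hvinj : ∀ {j j' : ℕ}, v j = v j' → j = j' := by
    intro j j' h
    rcases lt_trichotomy j j' with h'|h'|h'
    · exact absurd h (ne_of_lt (hvmono h'))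
    · exact h'
    · exact absurd h.symm (ne_of_lt (hvmono h'))
  have hm1 : 1 ≤ m := (Finset.mem_Icc.mp hm).1
  have hmN : m ≤ 2*k+3 := (Finset.mem_Icc.mp hm).2
  have hv1 : ∀ j, 1 ≤ v j := by intro j; simp only [hv]; split_ifs <;> omega
  have hv2 : ∀ j, v j ≤ j + 2 := by intro j; simp only [hv]; split_ifs <;> omega
  have hvne : ∀ j, v j ≠ m := by intro j; simp only [hv]; split_ifs <;> omega
  have hIform : ∀ n ∈ I, ∃ i ≤ k, n = v (2*i+δ) := by
    intro n hn
    have hn1 := Finset.mem_Icc.mp (hI hn)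
    have hnm : n ≠ m := fun h => hmI (h ▸ hn)
    rcases hg n hn with ⟨h1, h2⟩
    rcases lt_or_gt_of_ne hnm with hlt | hgt
    · have hp := h1 hlt
      refine ⟨(n-1-δ)/2, by omega, ?_⟩
      have h2i : 2*((n-1-δ)/2)+δ = n - 1 := by omega
      rw [h2i]; simp only [hv]; split_ifs <;> omega
    · have hp := h2 hgt
      refine ⟨(n-2-δ)/2, by omega, ?_⟩
      have h2i : 2*((n-2-δ)/2)+δ = n - 2 := by omega
      rw [h2i]; simp only [hv]; split_ifs <;> omega
  set A : Finset ℕ := (Finset.range (k+1)).image (fun i => v (2*i+δ)) with hA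
  have hIA : I = A := by
    apply Finset.eq_of_subset_of_card_le
    · intro n hn
      obtain ⟨i, hik, rfl⟩ := hIform n hn
      exact Finset.mem_image.mpr ⟨i, Finset.mem_range.mpr (by omega), rfl⟩
    · calc A.card ≤ (Finset.range (k+1)).card := Finset.card_image_le
        _ = k + 1 := Finset.card_range _
        _ = I.card := hIcard.symm
  set B : Finset ℕ := (Finset.range (k+1)).image (fun i => v (2*i+1-δ)) with hB
  set J : Finset ℕ := (Finset.Icc 1 (2*k+3) \ I).erase m with hJ
  have hJcard : J.card = k + 1 := by
    rw [hJ, Finset.card_erase_of_mem (by simp [Finset.mem_sdiff, hm, hmI]),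
      Finset.card_sdiff_of_subset hI, Nat.card_Icc, hIcard]
    omega
  have hBJ : B = J := by
    apply Finset.eq_of_subset_of_card_le
    · intro b hb
      obtain ⟨i, hi, rfl⟩ := Finset.mem_image.mp hb
      have hik := Finset.mem_range.mp hi
      rw [hJ]
      refine Finset.mem_erase.mpr ⟨hvne _, Finset.mem_sdiff.mpr ⟨?_, ?_⟩⟩
      · exact Finset.mem_Icc.mpr ⟨hv1 _, (hv2 _).trans (by omega)⟩
      · intro hmem
        rw [hIA] at hmem
        obtain ⟨i', hi', he⟩ := Finset.mem_image.mp hmem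
        have := hvinj he.symm
        omega
    · rw [hJcard]
      have : B.card = k + 1 := by
        rw [hB, Finset.card_image_of_injOn, Finset.card_range]
        intro a _ b _ hab
        have := hvinj hab
        omega
      omega
  refine ⟨k+1, fun i => v (2*(i:ℕ)+δ), fun i => v (2*(i:ℕ)+1-δ), ?_, ?_, ?_, ?_, ?_⟩
  · intro i j h; exact hvmono (by simp only [Fin.lt_def] at h; omega)
  · intro i j h; exact hvmono (by simp only [Fin.lt_def] at h; omega)
  · rw [hIA]; ext x
    simp only [Set.mem_range, hA, Finset.coe_image, Finset.coe_range, Set.mem_image,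
      Set.mem_Iio]
    constructor
    · rintro ⟨i, rfl⟩; exact ⟨i, i.isLt, rfl⟩
    · rintro ⟨i, hi, rfl⟩; exact ⟨⟨i, hi⟩, rfl⟩
  · rw [← hBJ]; ext x
    simp only [Set.mem_range, hB, Finset.coe_image, Finset.coe_range, Set.mem_image,
      Set.mem_Iio]
    constructor
    · rintro ⟨i, rfl⟩; exact ⟨i, i.isLt, rfl⟩
    · rintro ⟨i, hi, rfl⟩; exact ⟨⟨i, hi⟩, rfl⟩
  · interval_cases δ
    · exact Or.inl ⟨fun i => hvmono (by omega), fun i j hij => hvmono (by omega)⟩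
    · exact Or.inr ⟨fun i => hvmono (by omega), fun i j hij => hvmono (by omega)⟩

lemma necessAlt (k m : ℕ) (I : Finset ℕ) (hI : I ⊆ Finset.Icc 1 (2*k+3))
    (hm1 : 1 ≤ m) (hmI : m ∉ I)
    (halt : Alternates I ((Finset.Icc 1 (2*k+3) \ I).erase m)) :
    good m 0 I ∨ good m 1 I := by
  classical
  obtain ⟨p, f, g, hf, hg, hrf, hrg, hcase⟩ := halt
  set J : Finset ℕ := (Finset.Icc 1 (2*k+3) \ I).erase m with hJdef
  have hJI : ∀ a ∈ J, a ∉ I := by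
    intro a ha; exact (Finset.mem_sdiff.mp (Finset.mem_of_mem_erase ha)).2
  have hdisj : Disjoint I J := Finset.disjoint_right.mpr (fun {a} hb ha => hJI a hb ha)
  have hfI : ∀ i, f i ∈ I := fun i => by
    have h : f i ∈ Set.range f := Set.mem_range_self i
    rw [hrf] at h; exact h
  have hgJ : ∀ i, g i ∈ J := fun i => by
    have h : g i ∈ Set.range g := Set.mem_range_self i
    rw [hrg] at h; exact h
  have hIf : ∀ n ∈ I, ∃ i, f i = n := by
    intro n hn
    have h : n ∈ Set.range f := by rw [hrf]; exact hn
    exact h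
  have hJg : ∀ n ∈ J, ∃ i, g i = n := by
    intro n hn
    have h : n ∈ Set.range g := by rw [hrg]; exact hn
    exact h
  have hIcount : ∀ i : Fin p, (I.filter (· < f i)).card = i := by
    intro i
    have h := Finset.card_bij
      (s := Finset.range (i : ℕ)) (t := I.filter (· < f i))
      (fun t ht => f ⟨t, lt_trans (Finset.mem_range.mp ht) i.isLt⟩)
      (fun t ht => Finset.mem_filter.mpr ⟨hfI _,
        hf (by simp only [Fin.lt_def]; exact Finset.mem_range.mp ht)⟩)
      (fun a ha b hb hab => by
        have := hf.injective hab
        simpa using this)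
      (fun n hn => by
        obtain ⟨hnI, hlt⟩ := Finset.mem_filter.mp hn
        obtain ⟨j, rfl⟩ := hIf n hnI
        have hji : j < i := hf.lt_iff_lt.mp hlt
        exact ⟨(j : ℕ), Finset.mem_range.mpr hji, by simp⟩)
    rw [Finset.card_range] at h
    exact h.symm
  set U : Finset ℕ := (Finset.Icc 1 (2*k+3)).erase m with hUdef
  have hUIJ : U = I ∪ J := by
    ext a
    simp only [hUdef, hJdef, Finset.mem_union, Finset.mem_erase, Finset.mem_sdiff,
      Finset.mem_Icc]
    constructor
    · rintro ⟨h1, h2⟩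
      by_cases ha : a ∈ I
      · exact Or.inl ha
      · exact Or.inr ⟨h1, h2, ha⟩
    · rintro (ha | ⟨h1, h2, h3⟩)
      · have := Finset.mem_Icc.mp (hI ha)
        exact ⟨fun h => hmI (h ▸ ha), this⟩
      · exact ⟨h1, h2⟩
  have hUcount : ∀ n ∈ I, (U.filter (· < n)).card = n - 1 - (if m < n then 1 else 0) := by
    intro n hn
    have hn2 := Finset.mem_Icc.mp (hI hn)
    have heq : U.filter (· < n) = (Finset.Icc 1 (n-1)).erase m := by
      ext a
      simp only [hUdef, Finset.mem_filter, Finset.mem_erase, Finset.mem_Icc]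
      omega
    rw [heq]
    by_cases hmn : m < n
    · rw [Finset.card_erase_of_mem (Finset.mem_Icc.mpr ⟨hm1, by omega⟩), Nat.card_Icc]
      simp only [if_pos hmn]
      omega
    · rw [Finset.erase_eq_of_notMem (by simp only [Finset.mem_Icc]; omega), Nat.card_Icc]
      simp only [if_neg hmn]
      omega
  have key : ∀ c : ℕ, c ≤ 1 → (∀ i : Fin p, (J.filter (· < f i)).card = (i : ℕ) + c) →
      good m c I := by
    intro c hc hJc n hn
    obtain ⟨i, rfl⟩ := hIf n hn
    have e1 := hUcount (f i) hn
    have e2 : (U.filter (· < f i)).card = (i : ℕ) + ((i : ℕ) + c) := by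
      rw [hUIJ, Finset.filter_union,
        Finset.card_union_of_disjoint (Finset.disjoint_filter_filter hdisj),
        hIcount, hJc]
    rw [e2] at e1
    have hn2 := Finset.mem_Icc.mp (hI hn)
    constructor
    · intro hlt
      rw [if_neg (by omega)] at e1
      omega
    · intro hlt
      rw [if_pos hlt] at e1
      omega
  rcases hcase with ⟨hc1, hc2⟩ | ⟨hc1, hc2⟩
  · left
    apply key 0 (by omega)
    intro i
    have h := Finset.card_bij
      (s := Finset.range (i : ℕ)) (t := J.filter (· < f i))
      (fun t ht => g ⟨t, lt_trans (Finset.mem_range.mp ht) i.isLt⟩)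
      (fun t ht => by
        have htl := Finset.mem_range.mp ht
        refine Finset.mem_filter.mpr ⟨hgJ _, ?_⟩
        have h1 : g ⟨t, lt_trans htl i.isLt⟩ < f ⟨t+1, by omega⟩ :=
          hc2 _ _ rfl
        have h2 : f ⟨t+1, by omega⟩ ≤ f i := hf.monotone (by
          simp only [Fin.le_def]; omega)
        exact lt_of_lt_of_le h1 h2)
      (fun a ha b hb hab => by
        have := hg.injective hab
        simpa using this)
      (fun n hn => by
        obtain ⟨hnJ, hlt⟩ := Finset.mem_filter.mp hn
        obtain ⟨j, rfl⟩ := hJg n hnJ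
        have hji : (j : ℕ) < (i : ℕ) := by
          by_contra hcon
          have : f i < g j := lt_of_lt_of_le (hc1 i) (hg.monotone (by
            simp only [Fin.le_def]; omega))
          omega
        exact ⟨(j : ℕ), Finset.mem_range.mpr hji, by simp⟩)
    rw [Finset.card_range] at h
    simpa using h.symm
  · right
    apply key 1 (by omega)
    intro i
    have h := Finset.card_bij
      (s := Finset.range ((i : ℕ) + 1)) (t := J.filter (· < f i))
      (fun t ht => g ⟨t, by have := Finset.mem_range.mp ht; omega⟩)
      (fun t ht => by
        have htl := Finset.mem_range.mp ht
        refine Finset.mem_filter.mpr ⟨hgJ _, ?_⟩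
        have h2 : g ⟨t, by omega⟩ ≤ g i := hg.monotone (by
          simp only [Fin.le_def]; omega)
        exact lt_of_le_of_lt h2 (hc1 i))
      (fun a ha b hb hab => by
        have := hg.injective hab
        simpa using this)
      (fun n hn => by
        obtain ⟨hnJ, hlt⟩ := Finset.mem_filter.mp hn
        obtain ⟨j, rfl⟩ := hJg n hnJ
        have hji : (j : ℕ) < (i : ℕ) + 1 := by
          by_contra hcon
          have h3 : f i ≤ f ⟨(j : ℕ) - 1, by omega⟩ := hf.monotone (by
            simp only [Fin.le_def]; omega)
          have h4 : f ⟨(j : ℕ) - 1, by omega⟩ < g j := hc2 _ _ (by simp; omega)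
          omega
        exact ⟨(j : ℕ), Finset.mem_range.mpr hji, by simp⟩)
    rw [Finset.card_range] at h
    exact h.symm

lemma countEven (k : ℕ) (I : Finset ℕ) (hI : I ⊆ Finset.Icc 1 (2*k+3))
    (hIcard : I.card = k+1) :
    Even (((Finset.Icc 1 (2*k+3) \ I).filter
      (fun m => good m 0 I ∨ good m 1 I)).card) := by
  classical
  set C := Finset.Icc 1 (2*k+3) \ I with hC
  set S0 := I.filter (fun n => n % 2 = 0) with hS0
  set S1 := I.filter (fun n => n % 2 = 1) with hS1
  have hmemS0 : ∀ n, n ∈ S0 ↔ n ∈ I ∧ n % 2 = 0 := fun n => by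
    rw [hS0]; exact Finset.mem_filter
  have hmemS1 : ∀ n, n ∈ S1 ↔ n ∈ I ∧ n % 2 = 1 := fun n => by
    rw [hS1]; exact Finset.mem_filter
  set L0 := (insert 0 S1).max' (Finset.insert_nonempty _ _) with hL0
  set R0 := (insert (2*k+4) S0).min' (Finset.insert_nonempty _ _) with hR0
  set L1 := (insert 0 S0).max' (Finset.insert_nonempty _ _) with hL1
  set R1 := (insert (2*k+4) S1).min' (Finset.insert_nonempty _ _) with hR1
  have hfilters : ∀ δ L R : ℕ,
      (∀ n ∈ I, n % 2 ≠ δ → n ≤ L) → (L = 0 ∨ (L ∈ I ∧ L % 2 ≠ δ)) →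
      (∀ n ∈ I, n % 2 = δ → R ≤ n) → (R = 2*k+4 ∨ (R ∈ I ∧ R % 2 = δ)) →
      C.filter (fun m => good m δ I) =
        Finset.Icc (max (L+1) 1) (min (R-1) (2*k+3)) := by
    intro δ L R hLb hLm hRb hRm
    ext m
    simp only [Finset.mem_filter, hC, Finset.mem_sdiff, Finset.mem_Icc, good]
    constructor
    · rintro ⟨⟨⟨hm1, hm2⟩, hmI⟩, hgood⟩
      have hLlt : L < m := by
        rcases hLm with h | ⟨hLI, hLp⟩
        · omega
        · have h2 := (hgood L hLI).2
          have hne : L ≠ m := fun h => hmI (h ▸ hLI)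
          by_contra hcon
          exact hLp (h2 (by omega))
      have hRlt : m < R := by
        rcases hRm with h | ⟨hRI, hRp⟩
        · omega
        · have h1 := (hgood R hRI).1
          have hne : R ≠ m := fun h => hmI (h ▸ hRI)
          by_contra hcon
          exact (h1 (by omega)) hRp
      omega
    · rintro ⟨ha, hb⟩
      have hmI : m ∉ I := by
        intro hmem
        by_cases hp : m % 2 = δ
        · have := hRb m hmem hp; omega
        · have := hLb m hmem hp; omega
      refine ⟨⟨⟨by omega, by omega⟩, hmI⟩, ?_⟩
      intro n hn
      constructor
      · intro hlt hp
        have := hRb n hn hp; omega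
      · intro hlt
        by_contra hp
        have := hLb n hn hp; omega
  have hminfact : ∀ S : Finset ℕ, S ⊆ I → S.Nonempty →
      (insert (2*k+4) S).min' (Finset.insert_nonempty _ _) ∈ S := by
    intro S hS ⟨a, ha⟩
    have h1 : (insert (2*k+4) S).min' (Finset.insert_nonempty _ _) ≤ a :=
      Finset.min'_le _ _ (Finset.mem_insert_of_mem ha)
    have h2 := Finset.mem_Icc.mp (hI (hS ha))
    have h3 := Finset.min'_mem (insert (2*k+4) S) (Finset.insert_nonempty _ _)
    rcases Finset.mem_insert.mp h3 with h | h
    · omega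
    · exact h
  have hmaxfact : ∀ S : Finset ℕ, S ⊆ I → S.Nonempty →
      (insert 0 S).max' (Finset.insert_nonempty _ _) ∈ S := by
    intro S hS ⟨a, ha⟩
    have h1 : a ≤ (insert 0 S).max' (Finset.insert_nonempty _ _) :=
      Finset.le_max' _ _ (Finset.mem_insert_of_mem ha)
    have h2 := Finset.mem_Icc.mp (hI (hS ha))
    have h3 := Finset.max'_mem (insert 0 S) (Finset.insert_nonempty _ _)
    rcases Finset.mem_insert.mp h3 with h | h
    · omega
    · exact h
  have hS0sub : S0 ⊆ I := Finset.filter_subset _ _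
  have hS1sub : S1 ⊆ I := Finset.filter_subset _ _
  have hLb0 : ∀ n ∈ I, n % 2 ≠ 0 → n ≤ L0 := fun n hn hp =>
    Finset.le_max' _ _ (Finset.mem_insert_of_mem
      ((hmemS1 n).mpr ⟨hn, by omega⟩))
  have hRb0 : ∀ n ∈ I, n % 2 = 0 → R0 ≤ n := fun n hn hp =>
    Finset.min'_le _ _ (Finset.mem_insert_of_mem ((hmemS0 n).mpr ⟨hn, hp⟩))
  have hLb1 : ∀ n ∈ I, n % 2 ≠ 1 → n ≤ L1 := fun n hn hp =>
    Finset.le_max' _ _ (Finset.mem_insert_of_mem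
      ((hmemS0 n).mpr ⟨hn, by omega⟩))
  have hRb1 : ∀ n ∈ I, n % 2 = 1 → R1 ≤ n := fun n hn hp =>
    Finset.min'_le _ _ (Finset.mem_insert_of_mem ((hmemS1 n).mpr ⟨hn, hp⟩))
  have hLm0 : L0 = 0 ∨ (L0 ∈ I ∧ L0 % 2 ≠ 0) := by
    rcases Finset.mem_insert.mp (Finset.max'_mem (insert 0 S1)
      (Finset.insert_nonempty _ _)) with h | h
    · exact Or.inl h
    · have := (hmemS1 _).mp h
      exact Or.inr ⟨this.1, by omega⟩
  have hRm0 : R0 = 2*k+4 ∨ (R0 ∈ I ∧ R0 % 2 = 0) := by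
    rcases Finset.mem_insert.mp (Finset.min'_mem (insert (2*k+4) S0)
      (Finset.insert_nonempty _ _)) with h | h
    · exact Or.inl h
    · have := (hmemS0 _).mp h
      exact Or.inr ⟨this.1, this.2⟩
  have hLm1 : L1 = 0 ∨ (L1 ∈ I ∧ L1 % 2 ≠ 1) := by
    rcases Finset.mem_insert.mp (Finset.max'_mem (insert 0 S0)
      (Finset.insert_nonempty _ _)) with h | h
    · exact Or.inl h
    · have := (hmemS0 _).mp h
      exact Or.inr ⟨this.1, by omega⟩
  have hRm1 : R1 = 2*k+4 ∨ (R1 ∈ I ∧ R1 % 2 = 1) := by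
    rcases Finset.mem_insert.mp (Finset.min'_mem (insert (2*k+4) S1)
      (Finset.insert_nonempty _ _)) with h | h
    · exact Or.inl h
    · have := (hmemS1 _).mp h
      exact Or.inr ⟨this.1, this.2⟩
  have h0 := hfilters 0 L0 R0 hLb0 hLm0 hRb0 hRm0
  have h1 := hfilters 1 L1 R1 hLb1 hLm1 hRb1 hRm1
  have hdis : Disjoint (C.filter (fun m => good m 0 I))
      (C.filter (fun m => good m 1 I)) := by
    rw [Finset.disjoint_left]
    intro m hm0 hm1
    obtain ⟨hmC, hg0⟩ := Finset.mem_filter.mp hm0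
    obtain ⟨_, hg1⟩ := Finset.mem_filter.mp hm1
    have hmI : m ∉ I := (Finset.mem_sdiff.mp hmC).2
    obtain ⟨n, hn⟩ := Finset.card_pos.mp (by omega : 0 < I.card)
    have hne : n ≠ m := fun h => hmI (h ▸ hn)
    rcases lt_or_gt_of_ne hne with h | h
    · exact ((hg1 n hn).1 h) (by have := (hg0 n hn).1 h; omega)
    · have := (hg0 n hn).2 h
      have := (hg1 n hn).2 h
      omega
  rw [Finset.filter_or, Finset.card_union_of_disjoint hdis, h0, h1,
    Nat.card_Icc, Nat.card_Icc, Nat.even_iff]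
  -- case analysis on emptiness of S0, S1
  obtain ⟨n0, hn0⟩ := Finset.card_pos.mp (by omega : 0 < I.card)
  have hn0cc := Finset.mem_Icc.mp (hI hn0)
  rcases S0.eq_empty_or_nonempty with he0 | hne0 <;>
    rcases S1.eq_empty_or_nonempty with he1 | hne1
  · -- both empty: impossible
    exfalso
    by_cases hp : n0 % 2 = 0
    · have : n0 ∈ S0 := (hmemS0 n0).mpr ⟨hn0, hp⟩
      rw [he0] at this; simp at this
    · have : n0 ∈ S1 := (hmemS1 n0).mpr ⟨hn0, by omega⟩
      rw [he1] at this; simp at this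
  · -- S0 empty, S1 nonempty : I all odd
    have hR0v : R0 = 2*k+4 := by rw [hR0, he0]; simp
    have hL1v : L1 = 0 := by rw [hL1, he0]; simp
    have hL0m := hmaxfact S1 hS1sub hne1
    have hR1m := hminfact S1 hS1sub hne1
    have hL0f := (hmemS1 _).mp hL0m
    have hR1f := (hmemS1 _).mp hR1m
    have hb1 := Finset.mem_Icc.mp (hI hL0f.1)
    have hb2 := Finset.mem_Icc.mp (hI hR1f.1)
    have hp1 := hL0f.2
    have hp2 := hR1f.2
    omega
  · -- S0 nonempty, S1 empty : I all even
    have hL0v : L0 = 0 := by rw [hL0, he1]; simp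
    have hR1v : R1 = 2*k+4 := by rw [hR1, he1]; simp
    have hR0m := hminfact S0 hS0sub hne0
    have hL1m := hmaxfact S0 hS0sub hne0
    have hR0f := (hmemS0 _).mp hR0m
    have hL1f := (hmemS0 _).mp hL1m
    have hb1 := Finset.mem_Icc.mp (hI hR0f.1)
    have hb2 := Finset.mem_Icc.mp (hI hL1f.1)
    have hp1 := hR0f.2
    have hp2 := hL1f.2
    omega
  · -- both nonempty
    have hL0m := (hmemS1 _).mp (hmaxfact S1 hS1sub hne1)
    have hR1m := (hmemS1 _).mp (hminfact S1 hS1sub hne1)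
    have hR0m := (hmemS0 _).mp (hminfact S0 hS0sub hne0)
    have hL1m := (hmemS0 _).mp (hmaxfact S0 hS0sub hne0)
    have hb1 := Finset.mem_Icc.mp (hI hL0m.1)
    have hb2 := Finset.mem_Icc.mp (hI hR1m.1)
    have hb3 := Finset.mem_Icc.mp (hI hR0m.1)
    have hb4 := Finset.mem_Icc.mp (hI hL1m.1)
    have hp1 := hL0m.2
    have hp2 := hR1m.2
    have hp3 := hR0m.2
    have hp4 := hL1m.2
    omega

theorem stmt11 (k : ℕ) (hk : 1 ≤ k) (I : Finset ℕ)
    (hI : I ⊆ Finset.Icc 1 (2 * k + 3)) (hIcard : I.card = k + 1) :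
    Even (Set.ncard {J : Finset ℕ | J ⊆ Finset.Icc 1 (2 * k + 3) \ I ∧
      J.card = k + 1 ∧ Alternates I J}) := by
  classical
  set C := Finset.Icc 1 (2 * k + 3) \ I with hC
  set M := C.filter (fun m => good m 0 I ∨ good m 1 I) with hM
  have hCmem : ∀ a, a ∈ C ↔ a ∈ Finset.Icc 1 (2*k+3) ∧ a ∉ I := fun a => by
    rw [hC]; exact Finset.mem_sdiff
  have hMmem : ∀ a, a ∈ M ↔ a ∈ C ∧ (good a 0 I ∨ good a 1 I) := fun a => by
    rw [hM]; exact Finset.mem_filter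
  have hCcard : C.card = k + 2 := by
    rw [hC, Finset.card_sdiff_of_subset hI, Nat.card_Icc, hIcard]; omega
  have hSet : {J : Finset ℕ | J ⊆ C ∧ J.card = k + 1 ∧ Alternates I J} =
      ↑(M.image (fun m => C.erase m)) := by
    ext J
    simp only [Set.mem_setOf_eq, Finset.coe_image, Set.mem_image, Finset.mem_coe]
    constructor
    · rintro ⟨hJC, hJcard, halt⟩
      have h1 : (C \ J).card = 1 := by
        rw [Finset.card_sdiff_of_subset hJC, hCcard, hJcard]; omega
      obtain ⟨m, hm⟩ := Finset.card_eq_one.mp h1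
      have hmCJ : m ∈ C \ J := hm ▸ Finset.mem_singleton_self m
      have hmC : m ∈ C := (Finset.mem_sdiff.mp hmCJ).1
      have hJeq : J = C.erase m := by
        ext a
        constructor
        · intro ha
          refine Finset.mem_erase.mpr ⟨?_, hJC ha⟩
          intro h
          exact (Finset.mem_sdiff.mp hmCJ).2 (h ▸ ha)
        · intro ha
          obtain ⟨hne, haC⟩ := Finset.mem_erase.mp ha
          by_contra haJ
          have h2 : a ∈ C \ J := Finset.mem_sdiff.mpr ⟨haC, haJ⟩
          rw [hm] at h2
          exact hne (Finset.mem_singleton.mp h2)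
      have hmIcc : m ∈ Finset.Icc 1 (2*k+3) := ((hCmem m).mp hmC).1
      have hmI : m ∉ I := ((hCmem m).mp hmC).2
      refine ⟨m, ?_, hJeq.symm⟩
      refine (hMmem m).mpr ⟨hmC, ?_⟩
      have halt' : Alternates I ((Finset.Icc 1 (2*k+3) \ I).erase m) := by
        rw [hJeq, hC] at halt; exact halt
      exact necessAlt k m I hI (Finset.mem_Icc.mp hmIcc).1 hmI halt'
    · rintro ⟨m, hmM, rfl⟩
      obtain ⟨hmC, hgood⟩ := (hMmem m).mp hmM
      have hmIcc : m ∈ Finset.Icc 1 (2*k+3) := ((hCmem m).mp hmC).1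
      have hmI : m ∉ I := ((hCmem m).mp hmC).2
      refine ⟨Finset.erase_subset _ _, ?_, ?_⟩
      · rw [Finset.card_erase_of_mem hmC, hCcard]; omega
      · rw [hC]
        rcases hgood with h | h
        · exact constructAlt k m 0 I hI hIcard hmIcc hmI (by omega) h
        · exact constructAlt k m 1 I hI hIcard hmIcc hmI (by omega) h
  rw [hSet, Set.ncard_coe_finset]
  have hinj : Set.InjOn (fun m => C.erase m) ↑M := by
    intro a ha b hb hab
    simp only at hab
    have haC : a ∈ C := ((hMmem a).mp (Finset.mem_coe.mp ha)).1
    by_contra hne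
    have h1 : a ∈ C.erase b := Finset.mem_erase.mpr ⟨hne, haC⟩
    rw [← hab] at h1
    exact (Finset.mem_erase.mp h1).1 rfl
  rw [Finset.card_image_of_injOn hinj]
  have := countEven k I hI hIcard
  rw [hM, hC]
  exact this
end

section
/- Let k ≥ 1 and let I be a (k+1)-element subset of {1, 2, …, 2k+3} containing no two consecutive integers, with 1 ∈ I and 2k+3 ∉ I. Then exactly 2 of the (k+1)-element subsets J of {1, 2, …, 2k+3} \ I alternate with I. -/
/-!
A `(k+1)`-subset `I` of `{1, …, 2k+2}` without two consecutive elements meets every pair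
`{2i+1, 2i+2}` exactly once, and once it takes the even element of a pair it must take the even
element of every later pair. Hence `I = {1, 3, …, 2j-1, 2j+2, 2j+4, …, 2k+2}` for some
`1 ≤ j ≤ k+1`. Since `1 ∈ I`, a set alternating with `I` has its `i`-th element strictly between
the `i`-th and `(i+1)`-th elements of `I` (at most `2k+3` for the last one). Each of these gaps
contains a single integer, except the gap `(2j-1, 2j+2)`, which contains `2j` and `2j+1`.
-/

section Interlaces

variable {α : Type*} [LinearOrder α]

def Interlaces {p : ℕ} (f g : Fin p → α) : Prop :=
  (∀ i, f i < g i) ∧ ∀ i j : Fin p, (i : ℕ) + 1 = j → g i < f j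

theorem alternates_iff_exists_interlaces {P Q : Finset α} {p : ℕ} {f : Fin p → α}
    (hf : StrictMono f) (hP : Set.range f = P) :
    Alternates P Q ↔ ∃ g : Fin p → α, StrictMono g ∧ Set.range g = Q ∧
      (Interlaces f g ∨ Interlaces g f) := by
  constructor
  · rintro ⟨q, f', g, hf', hg, hf'P, hgQ, hfg⟩
    have hqp : q = p := by
      simpa [Set.ncard_range_of_injective hf'.injective,
        Set.ncard_range_of_injective hf.injective] using congrArg Set.ncard (hf'P.trans hP.symm)
    subst hqp
    obtain rfl : f' = f := (hf'.range_inj hf).1 (hf'P.trans hP.symm)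
    exact ⟨g, hg, hgQ, hfg⟩
  · rintro ⟨g, hg, hgQ, hfg⟩
    exact ⟨p, f, g, hf, hg, hP, hgQ, hfg⟩

end Interlaces

namespace NoConsecutive

/-- The `i`-th element, counted from `0`, of `{1, 3, …, 2j-1, 2j+2, 2j+4, …}`. -/
def oddEven (j i : ℕ) : ℕ := if i < j then 2 * i + 1 else 2 * i + 2

/-- The `i`-th element, counted from `0`, of `{2, 4, …, 2m, 2m+3, 2m+5, …}`. -/
def evenOdd (m i : ℕ) : ℕ := if i < m then 2 * i + 2 else 2 * i + 3

def oddEvenSet (k j : ℕ) : Finset ℕ := (Finset.range (k + 1)).image (oddEven j)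

def evenOddSet (k m : ℕ) : Finset ℕ := (Finset.range (k + 1)).image (evenOdd m)

theorem oddEven_strictMono (j : ℕ) : StrictMono (oddEven j) := by
  intro a b h; unfold oddEven; split <;> split <;> omega

theorem evenOdd_strictMono (m : ℕ) : StrictMono (evenOdd m) := by
  intro a b h; unfold evenOdd; split <;> split <;> omega

theorem range_fin_eq_image_range {β : Type*} [DecidableEq β] (n : ℕ) (f : ℕ → β) :
    Set.range (fun i : Fin n => f i) = ((Finset.range n).image f : Finset β) := by
  rw [Finset.coe_image, Finset.coe_range, ← Fin.range_val, ← Set.range_comp]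
  rfl

theorem card_oddEvenSet (k j : ℕ) : (oddEvenSet k j).card = k + 1 := by
  rw [oddEvenSet, Finset.card_image_of_injective _ (oddEven_strictMono j).injective,
    Finset.card_range]

theorem evenOddSet_ne (k : ℕ) {j : ℕ} (hj : 1 ≤ j) (hjk : j ≤ k + 1) :
    evenOddSet k j ≠ evenOddSet k (j - 1) := by
  intro h
  have hmem : 2 * j + 1 ∈ evenOddSet k (j - 1) :=
    Finset.mem_image.2 ⟨j - 1, Finset.mem_range.2 (by omega), by unfold evenOdd; split <;> omega⟩
  rw [← h] at hmem
  obtain ⟨i, -, hi⟩ := Finset.mem_image.1 hmem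
  unfold evenOdd at hi
  split at hi <;> omega

section Characterization

variable {k : ℕ} {I : Finset ℕ}

/-- Pigeonhole: `n ↦ (n - 1) / 2` is injective on `I`, which has as many elements as there
are pairs. -/
theorem mem_pair_of_card_eq (hI : I ⊆ Finset.Icc 1 (2 * k + 2))
    (hcons : ∀ t, t ∈ I → t + 1 ∉ I) (hcard : I.card = k + 1) {i : ℕ} (hi : i < k + 1) :
    2 * i + 1 ∈ I ∨ 2 * i + 2 ∈ I := by
  have hpairs : I.image (fun n => (n - 1) / 2) = Finset.range (k + 1) := by
    refine Finset.eq_of_subset_of_card_le (fun m hm => ?_) ?_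
    · obtain ⟨n, hn, rfl⟩ := Finset.mem_image.1 hm
      have := Finset.mem_Icc.1 (hI hn)
      exact Finset.mem_range.2 (by omega)
    · rw [Finset.card_range, ← hcard, Finset.card_image_of_injOn]
      intro a ha b hb hab
      have := Finset.mem_Icc.1 (hI ha)
      have := Finset.mem_Icc.1 (hI hb)
      have := hcons a ha
      have := hcons b hb
      simp only at hab
      by_contra hne
      rcases Nat.lt_or_gt_of_ne hne with h | h
      · obtain rfl : b = a + 1 := by omega
        contradiction
      · obtain rfl : a = b + 1 := by omega
        contradiction
  obtain ⟨n, hn, hni⟩ := Finset.mem_image.1 (hpairs ▸ Finset.mem_range.2 hi : i ∈ _)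
  have := Finset.mem_Icc.1 (hI hn)
  obtain rfl | rfl : n = 2 * i + 1 ∨ n = 2 * i + 2 := by omega
  exacts [Or.inl hn, Or.inr hn]

theorem exists_eq_oddEvenSet (hI : I ⊆ Finset.Icc 1 (2 * k + 2))
    (hcons : ∀ t, t ∈ I → t + 1 ∉ I) (hcard : I.card = k + 1) (h1 : 1 ∈ I) :
    ∃ j, 1 ≤ j ∧ j ≤ k + 1 ∧ I = oddEvenSet k j := by
  have hlast : 2 * (k + 1) + 1 ∉ I := fun h => by have := Finset.mem_Icc.1 (hI h); omega
  have hex : ∃ i, 2 * i + 1 ∉ I := ⟨k + 1, hlast⟩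
  set j := Nat.find hex
  have hodd : ∀ i < j, 2 * i + 1 ∈ I := fun i hi => not_not.1 (Nat.find_min hex hi)
  have heven : ∀ i, j ≤ i → i ≤ k → 2 * i + 2 ∈ I := by
    intro i hji hik
    induction i, hji using Nat.le_induction with
    | base => exact (mem_pair_of_card_eq hI hcons hcard (by omega)).resolve_left (Nat.find_spec hex)
    | succ i _ ih =>
      exact (mem_pair_of_card_eq hI hcons hcard (by omega)).resolve_left (hcons _ (ih (by omega)))
  have hj1 : 1 ≤ j := Nat.one_le_iff_ne_zero.2 fun h => (Nat.find_eq_zero hex).1 h h1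
  refine ⟨j, hj1, Nat.find_le hlast, ?_⟩
  refine (Finset.eq_of_subset_of_card_le (fun n hn => ?_) (by rw [card_oddEvenSet, hcard])).symm
  obtain ⟨i, hi, rfl⟩ := Finset.mem_image.1 hn
  have := Finset.mem_range.1 hi
  unfold oddEven
  split
  · exact hodd i (by omega)
  · exact heven i (by omega) (by omega)

end Characterization

section Alternation

variable {k j : ℕ}

theorem alternates_oddEvenSet_iff {J : Finset ℕ} :
    Alternates (oddEvenSet k j) J ↔ ∃ g : Fin (k + 1) → ℕ, StrictMono g ∧ Set.range g = J ∧
      (Interlaces (fun i => oddEven j i) g ∨ Interlaces g (fun i => oddEven j i)) :=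
  alternates_iff_exists_interlaces ((oddEven_strictMono j).comp Fin.val_strictMono)
    (range_fin_eq_image_range _ _)

theorem alternates_oddEvenSet_evenOddSet {m : ℕ} (hj : 1 ≤ j) (hm : j - 1 ≤ m) (hmj : m ≤ j) :
    evenOddSet k m ⊆ Finset.Icc 1 (2 * k + 3) \ oddEvenSet k j ∧
      (evenOddSet k m).card = k + 1 ∧ Alternates (oddEvenSet k j) (evenOddSet k m) := by
  refine ⟨fun n hn => ?_, ?_, ?_⟩
  · obtain ⟨i, hi, rfl⟩ := Finset.mem_image.1 hn
    have := Finset.mem_range.1 hi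
    refine Finset.mem_sdiff.2 ⟨Finset.mem_Icc.2 ⟨?_, ?_⟩, fun h => ?_⟩
    · unfold evenOdd; split <;> omega
    · unfold evenOdd; split <;> omega
    · obtain ⟨i', -, hi'⟩ := Finset.mem_image.1 h
      unfold evenOdd oddEven at hi'
      split at hi' <;> split at hi' <;> omega
  · rw [evenOddSet, Finset.card_image_of_injective _ (evenOdd_strictMono m).injective,
      Finset.card_range]
  · refine alternates_oddEvenSet_iff.2 ⟨_, (evenOdd_strictMono m).comp Fin.val_strictMono,
      range_fin_eq_image_range _ _, Or.inl ⟨fun i => ?_, fun i i' h => ?_⟩⟩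
    · simp only [Function.comp, oddEven, evenOdd]; split <;> split <;> omega
    · simp only [Function.comp, oddEven, evenOdd]; split <;> split <;> omega

theorem eq_evenOdd_of_mem_gap {i n : ℕ} (hlo : oddEven j i < n) (hhi : n < oddEven j (i + 1)) :
    n = evenOdd j i ∨ i + 1 = j ∧ n = 2 * j + 1 := by
  unfold oddEven at hlo hhi
  unfold evenOdd
  split at hlo <;> split at hhi <;> split <;> omega

theorem eq_evenOddSet_of_alternates (hj : 1 ≤ j) (hjk : j ≤ k + 1) {J : Finset ℕ}
    (hJ : J ⊆ Finset.Icc 1 (2 * k + 3)) (halt : Alternates (oddEvenSet k j) J) :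
    J = evenOddSet k j ∨ J = evenOddSet k (j - 1) := by
  obtain ⟨g, -, hgJ, hfg | hgf⟩ := alternates_oddEvenSet_iff.1 halt
  swap
  · have hg0 : g 0 < oddEven j 0 := hgf.1 0
    rw [oddEven, if_pos (show 0 < j from hj)] at hg0
    have := Finset.mem_Icc.1 (hJ (Finset.mem_coe.1 (hgJ ▸ Set.mem_range_self 0)))
    omega
  have hgap : ∀ i : Fin (k + 1), g i = evenOdd j i ∨ (i : ℕ) + 1 = j ∧ g i = 2 * j + 1 := by
    intro i
    refine eq_evenOdd_of_mem_gap (hfg.1 i) ?_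
    by_cases hi : (i : ℕ) + 1 < k + 1
    · exact hfg.2 i ⟨i + 1, hi⟩ rfl
    · have := Finset.mem_Icc.1 (hJ (Finset.mem_coe.1 (hgJ ▸ Set.mem_range_self i)))
      unfold oddEven; split <;> omega
  have hJ_eq : ∀ m, (∀ i : Fin (k + 1), g i = evenOdd m i) → J = evenOddSet k m := fun m h =>
    Finset.coe_injective <| by rw [← hgJ, evenOddSet, ← range_fin_eq_image_range, funext h]
  by_cases hall : ∀ i : Fin (k + 1), g i = evenOdd j i
  · exact Or.inl (hJ_eq j hall)
  obtain ⟨i₀, hi₀⟩ := not_forall.1 hall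
  obtain ⟨hi₀j, -⟩ := (hgap i₀).resolve_left hi₀
  refine Or.inr (hJ_eq (j - 1) fun i => ?_)
  rcases hgap i with h | ⟨hij, h⟩
  · have : (i : ℕ) ≠ i₀ := Fin.val_injective.ne fun hii => hi₀ (hii ▸ h)
    rw [h]; unfold evenOdd; split <;> split <;> omega
  · rw [h]; unfold evenOdd; split <;> omega

theorem setOf_alternates_oddEvenSet (hj : 1 ≤ j) (hjk : j ≤ k + 1) :
    {J : Finset ℕ | J ⊆ Finset.Icc 1 (2 * k + 3) \ oddEvenSet k j ∧
      J.card = k + 1 ∧ Alternates (oddEvenSet k j) J} = {evenOddSet k j, evenOddSet k (j - 1)} := by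
  ext J
  simp only [Set.mem_ofPred_eq, Set.mem_insert_iff, Set.mem_singleton_iff]
  constructor
  · rintro ⟨hJ, -, halt⟩
    exact eq_evenOddSet_of_alternates hj hjk (hJ.trans Finset.sdiff_subset) halt
  · rintro (rfl | rfl)
    exacts [alternates_oddEvenSet_evenOddSet hj (by omega) le_rfl,
      alternates_oddEvenSet_evenOddSet hj le_rfl (by omega)]

end Alternation

end NoConsecutive

theorem stmt13_general (k : ℕ) (I : Finset ℕ)
    (hI : I ⊆ Finset.Icc 1 (2 * k + 3)) (hIcard : I.card = k + 1)
    (hcons : ∀ t, t ∈ I → t + 1 ∉ I) (h1 : 1 ∈ I) (hlast : 2 * k + 3 ∉ I) :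
    Set.ncard {J : Finset ℕ | J ⊆ Finset.Icc 1 (2 * k + 3) \ I ∧
      J.card = k + 1 ∧ Alternates I J} = 2 := by
  have hI' : I ⊆ Finset.Icc 1 (2 * k + 2) := fun n hn => by
    have := Finset.mem_Icc.1 (hI hn)
    exact Finset.mem_Icc.2 ⟨this.1, by have := ne_of_mem_of_not_mem hn hlast; omega⟩
  obtain ⟨j, hj, hjk, rfl⟩ := NoConsecutive.exists_eq_oddEvenSet hI' hcons hIcard h1
  rw [NoConsecutive.setOf_alternates_oddEvenSet hj hjk]
  exact Set.ncard_pair (NoConsecutive.evenOddSet_ne k hj hjk)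

theorem stmt13 (k : ℕ) (hk : 1 ≤ k) (I : Finset ℕ)
    (hI : I ⊆ Finset.Icc 1 (2 * k + 3)) (hIcard : I.card = k + 1)
    (hcons : ∀ t, t ∈ I → t + 1 ∉ I) (h1 : 1 ∈ I) (hlast : 2 * k + 3 ∉ I) :
    Set.ncard {J : Finset ℕ | J ⊆ Finset.Icc 1 (2 * k + 3) \ I ∧
      J.card = k + 1 ∧ Alternates I J} = 2 :=
  stmt13_general k I hI hIcard hcons h1 hlast
end

section
/- Let k ≥ 1 and let S be a set of 2k+3 points in general position in ℝ^(2k). Then for every (k+1)-element subset I ⊆ S, the number of points in conv I ∩ ∂conv(S \ I) (where ∂conv(S \ I) is the union of the convex hulls of the (k+1)-element subsets of S \ I) equals the number of (k+1)-element subsets J ⊆ S \ I with conv I ∩ conv J ≠ ∅; in particular this intersection is finite. -/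
open scoped Classical

/-- A finite set of points in `ℝ^d` is in general position if every
`(d+1)`-element subset of it is affinely independent. -/
def GenPos (d : ℕ) (S : Finset (Fin d → ℝ)) : Prop :=
  ∀ T ⊆ S, T.card = d + 1 →
    AffineIndependent ℝ (fun x : (T : Set (Fin d → ℝ)) => (x : Fin d → ℝ))

/-- The boundary of the simplex with vertex set `B`: the union of the convex
hulls of the `m`-element subsets of `B`. -/
def simplexBoundary (d m : ℕ) (B : Finset (Fin d → ℝ)) : Set (Fin d → ℝ) :=
  ⋃ Y ∈ B.powersetCard m, convexHull ℝ (Y : Set (Fin d → ℝ))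

/-- Convex hull membership for a finset, in convenient linear-combination form. -/
lemma mem_convexHull_finset {E : Type*} [AddCommGroup E] [Module ℝ E] {s : Finset E} {x : E}
    (hx : x ∈ convexHull ℝ (s : Set E)) :
    ∃ w : E → ℝ, (∀ y ∈ s, 0 ≤ w y) ∧ ∑ y ∈ s, w y = 1 ∧ ∑ y ∈ s, w y • y = x := by
  rw [Finset.convexHull_eq] at hx
  obtain ⟨w, h1, h2, h3⟩ := hx
  refine ⟨w, h1, h2, ?_⟩
  rw [Finset.centerMass_eq_of_sum_1 _ _ h2] at h3
  simpa using h3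

/-- In a set in general position, any affine dependence supported on at most
`d+1` points is trivial. -/
lemma depZero {d : ℕ} {S : Finset (Fin d → ℝ)} (hgp : GenPos d S)
    (hScard : d + 1 ≤ S.card)
    {T : Finset (Fin d → ℝ)} (hTS : T ⊆ S) (hT : T.card ≤ d + 1)
    {w : (Fin d → ℝ) → ℝ} (h0 : ∑ p ∈ T, w p = 0)
    (h1 : ∑ p ∈ T, w p • p = 0) : ∀ p ∈ T, w p = 0 := by
  obtain ⟨T', hTT', hT'S, hT'card⟩ := Finset.exists_subsuperset_card_eq hTS hT hScard
  have ai := hgp T' hT'S hT'card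
  rw [affineIndependent_iff_of_fintype] at ai
  set w' : ↥(T' : Set (Fin d → ℝ)) → ℝ :=
    fun x => if (x : Fin d → ℝ) ∈ T then w x else 0 with hw'
  have hsum : ∑ i, w' i = 0 := by
    have : ∑ i : (T' : Set (Fin d → ℝ)), w' i
        = ∑ p ∈ T', (if p ∈ T then w p else 0) :=
      Finset.sum_coe_sort T' (fun p => if p ∈ T then w p else 0)
    rw [this, Finset.sum_ite_mem, Finset.inter_eq_right.mpr hTT'] at *
    exact h0
  have hvsub : (Finset.univ.weightedVSub (fun x : (T' : Set (Fin d → ℝ)) => (x : Fin d → ℝ))) w' = 0 := by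
    rw [Finset.weightedVSub_eq_linear_combination _ hsum]
    have : ∑ i : (T' : Set (Fin d → ℝ)), w' i • (i : Fin d → ℝ)
        = ∑ p ∈ T', (if p ∈ T then w p else 0) • p :=
      Finset.sum_coe_sort T' (fun p => (if p ∈ T then w p else 0) • p)
    rw [this]
    have h2 : ∑ p ∈ T', (if p ∈ T then w p else 0) • p = ∑ p ∈ T', (if p ∈ T then w p • p else 0) := by
      apply Finset.sum_congr rfl; intro p _; split <;> simp
    rw [h2, Finset.sum_ite_mem, Finset.inter_eq_right.mpr hTT']
    exact h1
  intro p hp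
  have := ai w' hsum hvsub ⟨p, hTT' hp⟩
  simpa [hw', hp] using this

/-- Two disjoint simplices on `k+1` points each of a `(2k)`-dimensional set in
general position meet in at most one point. -/
lemma unique_pt {k : ℕ} {S : Finset (Fin (2 * k) → ℝ)} (hgp : GenPos (2 * k) S)
    (hScard : 2 * k + 2 ≤ S.card)
    {I J : Finset (Fin (2 * k) → ℝ)} (hIS : I ⊆ S) (hJS : J ⊆ S)
    (hdisj : Disjoint I J) (hIc : I.card = k + 1) (hJc : J.card = k + 1)
    {x y : Fin (2 * k) → ℝ}
    (hx : x ∈ convexHull ℝ (I : Set (Fin (2 * k) → ℝ)) ∩ convexHull ℝ (J : Set (Fin (2 * k) → ℝ)))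
    (hy : y ∈ convexHull ℝ (I : Set (Fin (2 * k) → ℝ)) ∩ convexHull ℝ (J : Set (Fin (2 * k) → ℝ))) :
    x = y := by
  obtain ⟨a, ha0, ha1, hax⟩ := mem_convexHull_finset hx.1
  obtain ⟨b, hb0, hb1, hbx⟩ := mem_convexHull_finset hx.2
  obtain ⟨c, hc0, hc1, hcy⟩ := mem_convexHull_finset hy.1
  obtain ⟨d, hd0, hd1, hdy⟩ := mem_convexHull_finset hy.2
  -- the two affine dependences
  set w1 : (Fin (2 * k) → ℝ) → ℝ :=
    fun p => (if p ∈ I then a p else 0) - (if p ∈ J then b p else 0) with hw1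
  set w2 : (Fin (2 * k) → ℝ) → ℝ :=
    fun p => (if p ∈ I then c p else 0) - (if p ∈ J then d p else 0) with hw2
  have hsplitI : ∀ f : (Fin (2*k) → ℝ) → ℝ, ∑ p ∈ I ∪ J, (if p ∈ I then f p else 0) = ∑ p ∈ I, f p := by
    intro f; rw [Finset.sum_ite_mem, Finset.union_inter_cancel_left]
  have hsplitJ : ∀ f : (Fin (2*k) → ℝ) → ℝ, ∑ p ∈ I ∪ J, (if p ∈ J then f p else 0) = ∑ p ∈ J, f p := by
    intro f; rw [Finset.sum_ite_mem, Finset.union_inter_cancel_right]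
  have hsplitI' : ∀ f : (Fin (2*k) → ℝ) → ℝ,
      ∑ p ∈ I ∪ J, (if p ∈ I then f p else 0) • p = ∑ p ∈ I, f p • p := by
    intro f
    have : ∀ p, (if p ∈ I then f p else 0) • p = (if p ∈ I then f p • p else 0) := by
      intro p; split <;> simp
    simp_rw [this]
    rw [Finset.sum_ite_mem, Finset.union_inter_cancel_left]
  have hsplitJ' : ∀ f : (Fin (2*k) → ℝ) → ℝ,
      ∑ p ∈ I ∪ J, (if p ∈ J then f p else 0) • p = ∑ p ∈ J, f p • p := by
    intro f
    have : ∀ p, (if p ∈ J then f p else 0) • p = (if p ∈ J then f p • p else 0) := by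
      intro p; split <;> simp
    simp_rw [this]
    rw [Finset.sum_ite_mem, Finset.union_inter_cancel_right]
  have hw1sum : ∑ p ∈ I ∪ J, w1 p = 0 := by
    simp only [hw1, Finset.sum_sub_distrib, hsplitI, hsplitJ, ha1, hb1, sub_self]
  have hw2sum : ∑ p ∈ I ∪ J, w2 p = 0 := by
    simp only [hw2, Finset.sum_sub_distrib, hsplitI, hsplitJ, hc1, hd1, sub_self]
  have hw1vec : ∑ p ∈ I ∪ J, w1 p • p = 0 := by
    simp only [hw1, sub_smul, Finset.sum_sub_distrib, hsplitI', hsplitJ', hax, hbx, sub_self]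
  have hw2vec : ∑ p ∈ I ∪ J, w2 p • p = 0 := by
    simp only [hw2, sub_smul, Finset.sum_sub_distrib, hsplitI', hsplitJ', hcy, hdy, sub_self]
  -- choose i0 ∈ I with a i0 ≠ 0
  obtain ⟨i0, hi0I, hi0⟩ : ∃ i0 ∈ I, a i0 ≠ 0 := by
    by_contra h
    push_neg at h
    have : ∑ p ∈ I, a p = 0 := Finset.sum_eq_zero h
    rw [ha1] at this; norm_num at this
  set u : (Fin (2 * k) → ℝ) → ℝ := fun p => a i0 * w2 p - c i0 * w1 p with hu
  have hui0 : u i0 = 0 := by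
    simp only [hu, hw1, hw2, if_pos hi0I, if_neg (Finset.disjoint_left.mp hdisj hi0I)]
    ring
  have hi0mem : i0 ∈ I ∪ J := Finset.mem_union_left _ hi0I
  have hcardIJ : (I ∪ J).card = 2 * k + 2 := by
    rw [Finset.card_union_of_disjoint hdisj, hIc, hJc]; ring
  have hTcard : ((I ∪ J).erase i0).card = 2 * k + 1 := by
    rw [Finset.card_erase_of_mem hi0mem, hcardIJ]
    omega
  have hTsub : (I ∪ J).erase i0 ⊆ S := by
    intro p hp
    rcases Finset.mem_union.mp (Finset.mem_of_mem_erase hp) with h | h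
    · exact hIS h
    · exact hJS h
  have husum : ∑ p ∈ (I ∪ J).erase i0, u p = 0 := by
    rw [Finset.sum_erase_eq_sub hi0mem, hui0, sub_zero]
    simp only [hu, Finset.sum_sub_distrib, ← Finset.mul_sum, hw1sum, hw2sum, mul_zero, sub_self]
  have huvec : ∑ p ∈ (I ∪ J).erase i0, u p • p = 0 := by
    rw [Finset.sum_erase_eq_sub hi0mem, hui0, zero_smul, sub_zero]
    simp only [hu, sub_smul, mul_smul, Finset.sum_sub_distrib, ← Finset.smul_sum, hw1vec, hw2vec,
      smul_zero, sub_self]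
  have huzero : ∀ p ∈ I ∪ J, u p = 0 := by
    intro p hp
    rcases eq_or_ne p i0 with rfl | hne
    · exact hui0
    · exact depZero hgp (by omega) hTsub (le_of_eq hTcard) husum huvec p
        (Finset.mem_erase.mpr ⟨hne, hp⟩)
  -- u = 0 on I gives a i0 * c p = c i0 * a p for p ∈ I
  have hIrel : ∀ p ∈ I, a i0 * c p = c i0 * a p := by
    intro p hp
    have := huzero p (Finset.mem_union_left _ hp)
    simp only [hu, hw1, hw2, if_pos hp, if_neg (Finset.disjoint_left.mp hdisj hp)] at this
    linarith
  have hac : a i0 = c i0 := by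
    have h1 : ∑ p ∈ I, (a i0 * c p) = ∑ p ∈ I, (c i0 * a p) :=
      Finset.sum_congr rfl hIrel
    rw [← Finset.mul_sum, ← Finset.mul_sum, hc1, ha1, mul_one, mul_one] at h1
    exact h1
  have hacp : ∀ p ∈ I, a p = c p := by
    intro p hp
    have := hIrel p hp
    rw [← hac] at this
    exact (mul_left_cancel₀ hi0 this.symm)
  rw [← hax, ← hcy]
  exact Finset.sum_congr rfl (fun p hp => by rw [hacp p hp])

/-- A point of `conv I` lies in the convex hull of at most one `(k+1)`-subset
of the complement. -/
lemma unique_J {k : ℕ} (hk : 1 ≤ k) {S : Finset (Fin (2 * k) → ℝ)} (hgp : GenPos (2 * k) S)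
    (hScard : S.card = 2 * k + 3)
    {I J J' : Finset (Fin (2 * k) → ℝ)} (hIS : I ⊆ S) (hIc : I.card = k + 1)
    (hJ : J ⊆ S \ I) (hJc : J.card = k + 1) (hJ' : J' ⊆ S \ I) (hJ'c : J'.card = k + 1)
    {x : Fin (2 * k) → ℝ}
    (hxI : x ∈ convexHull ℝ (I : Set (Fin (2 * k) → ℝ)))
    (hxJ : x ∈ convexHull ℝ (J : Set (Fin (2 * k) → ℝ)))
    (hxJ' : x ∈ convexHull ℝ (J' : Set (Fin (2 * k) → ℝ))) : J = J' := by
  by_contra hne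
  obtain ⟨a, ha0, ha1, hax⟩ := mem_convexHull_finset hxI
  obtain ⟨b, hb0, hb1, hbx⟩ := mem_convexHull_finset hxJ
  obtain ⟨d, hd0, hd1, hdx⟩ := mem_convexHull_finset hxJ'
  have hBS : S \ I ⊆ S := Finset.sdiff_subset
  have hBcard : (S \ I).card = k + 2 := by
    rw [Finset.card_sdiff_of_subset (by assumption), hScard, hIc]; omega
  -- step 1 : b is supported on J ∩ J'
  set w : (Fin (2 * k) → ℝ) → ℝ :=
    fun p => (if p ∈ J then b p else 0) - (if p ∈ J' then d p else 0) with hw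
  have hJJ'S : J ∪ J' ⊆ S := fun p hp => hBS (by
    rcases Finset.mem_union.mp hp with h | h
    · exact hJ h
    · exact hJ' h)
  have hJJ'card : (J ∪ J').card ≤ 2 * k + 1 := by
    calc (J ∪ J').card ≤ (S \ I).card := Finset.card_le_card (Finset.union_subset hJ hJ')
    _ = k + 2 := hBcard
    _ ≤ 2 * k + 1 := by omega
  have hsplitJ : ∀ f : (Fin (2*k) → ℝ) → ℝ, ∑ p ∈ J ∪ J', (if p ∈ J then f p else 0) = ∑ p ∈ J, f p := by
    intro f; rw [Finset.sum_ite_mem, Finset.union_inter_cancel_left]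
  have hsplitJ' : ∀ f : (Fin (2*k) → ℝ) → ℝ, ∑ p ∈ J ∪ J', (if p ∈ J' then f p else 0) = ∑ p ∈ J', f p := by
    intro f; rw [Finset.sum_ite_mem, Finset.union_inter_cancel_right]
  have hwsum : ∑ p ∈ J ∪ J', w p = 0 := by
    simp only [hw, Finset.sum_sub_distrib, hsplitJ, hsplitJ', hb1, hd1, sub_self]
  have hwvec : ∑ p ∈ J ∪ J', w p • p = 0 := by
    have e1 : ∀ p, (if p ∈ J then b p else 0) • p = (if p ∈ J then b p • p else 0) := by
      intro p; split <;> simp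
    have e2 : ∀ p, (if p ∈ J' then d p else 0) • p = (if p ∈ J' then d p • p else 0) := by
      intro p; split <;> simp
    simp only [hw, sub_smul, Finset.sum_sub_distrib]
    simp_rw [e1, e2]
    rw [Finset.sum_ite_mem, Finset.union_inter_cancel_left,
      Finset.sum_ite_mem, Finset.union_inter_cancel_right, hbx, hdx, sub_self]
  have hwzero : ∀ p ∈ J ∪ J', w p = 0 :=
    depZero hgp (by omega) hJJ'S hJJ'card hwsum hwvec
  have hbsupp : ∀ p ∈ J, p ∉ J' → b p = 0 := by
    intro p hp hp'
    have := hwzero p (Finset.mem_union_left _ hp)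
    simpa [hw, hp, hp'] using this
  -- step 2 : affine dependence on I ∪ (J ∩ J')
  set v : (Fin (2 * k) → ℝ) → ℝ :=
    fun p => (if p ∈ I then a p else 0) - (if p ∈ J then b p else 0) with hv
  have hdisj : Disjoint I (S \ I) := (Finset.sdiff_disjoint).symm
  have hdisjIJ : Disjoint I J := hdisj.mono_right hJ
  have hsplitI2 : ∀ f : (Fin (2*k) → ℝ) → ℝ, ∑ p ∈ I ∪ J, (if p ∈ I then f p else 0) = ∑ p ∈ I, f p := by
    intro f; rw [Finset.sum_ite_mem, Finset.union_inter_cancel_left]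
  have hsplitJ2 : ∀ f : (Fin (2*k) → ℝ) → ℝ, ∑ p ∈ I ∪ J, (if p ∈ J then f p else 0) = ∑ p ∈ J, f p := by
    intro f; rw [Finset.sum_ite_mem, Finset.union_inter_cancel_right]
  have hvsum : ∑ p ∈ I ∪ J, v p = 0 := by
    simp only [hv, Finset.sum_sub_distrib, hsplitI2, hsplitJ2, ha1, hb1, sub_self]
  have hvvec : ∑ p ∈ I ∪ J, v p • p = 0 := by
    have e1 : ∀ p, (if p ∈ I then a p else 0) • p = (if p ∈ I then a p • p else 0) := by
      intro p; split <;> simp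
    have e2 : ∀ p, (if p ∈ J then b p else 0) • p = (if p ∈ J then b p • p else 0) := by
      intro p; split <;> simp
    simp only [hv, sub_smul, Finset.sum_sub_distrib]
    simp_rw [e1, e2]
    rw [Finset.sum_ite_mem, Finset.union_inter_cancel_left,
      Finset.sum_ite_mem, Finset.union_inter_cancel_right, hax, hbx, sub_self]
  set T2 : Finset (Fin (2 * k) → ℝ) := I ∪ (J ∩ J') with hT2
  have hT2sub : T2 ⊆ I ∪ J := Finset.union_subset_union_right Finset.inter_subset_left
  have hvsupp : ∀ p ∈ I ∪ J, p ∉ T2 → v p = 0 := by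
    intro p hp hpT
    have hpI : p ∉ I := fun h => hpT (Finset.mem_union_left _ h)
    have hpJ : p ∈ J := (Finset.mem_union.mp hp).resolve_left hpI
    have hpJ' : p ∉ J' := fun h => hpT (Finset.mem_union_right _ (Finset.mem_inter.mpr ⟨hpJ, h⟩))
    simp [hv, hpI, hpJ, hbsupp p hpJ hpJ']
  have hvsumT2 : ∑ p ∈ T2, v p = 0 := by
    rw [Finset.sum_subset hT2sub hvsupp]; exact hvsum
  have hvvecT2 : ∑ p ∈ T2, v p • p = 0 := by
    rw [Finset.sum_subset hT2sub (fun p hp hpT => by rw [hvsupp p hp hpT, zero_smul])]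
    exact hvvec
  have hJJ'ne : ¬ J ⊆ J' := by
    intro h
    exact hne (Finset.eq_of_subset_of_card_le h (by omega))
  have hinter_card : (J ∩ J').card ≤ k := by
    by_contra h
    push_neg at h
    have h1 : (J ∩ J').card = k + 1 := le_antisymm (hJc ▸ Finset.card_le_card Finset.inter_subset_left) h
    have : J ∩ J' = J := Finset.eq_of_subset_of_card_le Finset.inter_subset_left (by omega)
    exact hJJ'ne (this ▸ Finset.inter_subset_right)
  have hT2S : T2 ⊆ S := Finset.union_subset hIS (fun p hp => hBS (hJ (Finset.mem_inter.mp hp).1))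
  have hT2card : T2.card ≤ 2 * k + 1 := by
    calc T2.card ≤ I.card + (J ∩ J').card := Finset.card_union_le _ _
    _ ≤ (k + 1) + k := by rw [hIc]; omega
    _ ≤ 2 * k + 1 := by omega
  have hvzero : ∀ p ∈ T2, v p = 0 :=
    depZero hgp (by omega) hT2S hT2card hvsumT2 hvvecT2
  have hazero : ∀ p ∈ I, a p = 0 := by
    intro p hp
    have := hvzero p (Finset.mem_union_left _ hp)
    simpa [hv, hp, Finset.disjoint_left.mp hdisjIJ hp] using this
  have : (1 : ℝ) = 0 := by
    rw [← ha1]; exact Finset.sum_eq_zero hazero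
  norm_num at this

theorem stmt16 (k : ℕ) (hk : 1 ≤ k) (S : Finset (Fin (2 * k) → ℝ))
    (hcard : S.card = 2 * k + 3) (hgp : GenPos (2 * k) S) :
    ∀ I ⊆ S, I.card = k + 1 →
      (convexHull ℝ (I : Set (Fin (2 * k) → ℝ)) ∩
        simplexBoundary (2 * k) (k + 1) (S \ I)).Finite ∧
      (convexHull ℝ (I : Set (Fin (2 * k) → ℝ)) ∩
        simplexBoundary (2 * k) (k + 1) (S \ I)).ncard =
        Set.ncard {J : Finset (Fin (2 * k) → ℝ) | J ⊆ S \ I ∧ J.card = k + 1 ∧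
          (convexHull ℝ (I : Set (Fin (2 * k) → ℝ)) ∩
            convexHull ℝ (J : Set (Fin (2 * k) → ℝ))).Nonempty} := by
  intro I hIS hIcard
  set B : Finset (Fin (2 * k) → ℝ) := S \ I with hB
  set good : Finset (Finset (Fin (2 * k) → ℝ)) :=
    (B.powersetCard (k + 1)).filter
      (fun J => (convexHull ℝ (I : Set (Fin (2 * k) → ℝ)) ∩
        convexHull ℝ (J : Set (Fin (2 * k) → ℝ))).Nonempty) with hgood
  set pt : Finset (Fin (2 * k) → ℝ) → (Fin (2 * k) → ℝ) :=
    fun J => if h : (convexHull ℝ (I : Set (Fin (2 * k) → ℝ)) ∩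
        convexHull ℝ (J : Set (Fin (2 * k) → ℝ))).Nonempty then h.choose else 0 with hpt
  have hmem_good : ∀ J ∈ good, J ⊆ B ∧ J.card = k + 1 ∧
      pt J ∈ convexHull ℝ (I : Set (Fin (2 * k) → ℝ)) ∩
        convexHull ℝ (J : Set (Fin (2 * k) → ℝ)) := by
    intro J hJ
    rw [hgood, Finset.mem_filter, Finset.mem_powersetCard] at hJ
    obtain ⟨⟨h1, h2⟩, h3⟩ := hJ
    exact ⟨h1, h2, by rw [hpt]; simp only [dif_pos h3]; exact h3.choose_spec⟩
  have hdisjIB : Disjoint I B := (Finset.sdiff_disjoint).symm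
  -- key uniqueness: for J ∈ good, any point of conv I ∩ conv J equals pt J
  have huniq : ∀ J ∈ good, ∀ x, x ∈ convexHull ℝ (I : Set (Fin (2 * k) → ℝ)) ∩
      convexHull ℝ (J : Set (Fin (2 * k) → ℝ)) → x = pt J := by
    intro J hJ x hx
    obtain ⟨hJB, hJc, hptJ⟩ := hmem_good J hJ
    exact unique_pt hgp (by omega) hIS (hJB.trans Finset.sdiff_subset)
      (hdisjIB.mono_right hJB) hIcard hJc hx hptJ
  have hset : convexHull ℝ (I : Set (Fin (2 * k) → ℝ)) ∩
      simplexBoundary (2 * k) (k + 1) B = ↑(good.image pt) := by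
    ext x
    simp only [Finset.coe_image, Set.mem_image, Finset.mem_coe, Set.mem_inter_iff,
      simplexBoundary, Set.mem_iUnion]
    constructor
    · rintro ⟨hxI, J, hJmem, hxJ⟩
      have hJgood : J ∈ good := by
        rw [hgood, Finset.mem_filter]
        exact ⟨hJmem, ⟨x, hxI, hxJ⟩⟩
      exact ⟨J, hJgood, (huniq J hJgood x ⟨hxI, hxJ⟩).symm⟩
    · rintro ⟨J, hJgood, rfl⟩
      obtain ⟨hJB, hJc, hptJ⟩ := hmem_good J hJgood
      exact ⟨hptJ.1, J, Finset.mem_powersetCard.mpr ⟨hJB, hJc⟩, hptJ.2⟩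
  have hinj : Set.InjOn pt ↑good := by
    intro J hJ J' hJ' hpteq
    obtain ⟨hJB, hJc, hptJ⟩ := hmem_good J hJ
    obtain ⟨hJ'B, hJ'c, hptJ'⟩ := hmem_good J' hJ'
    exact unique_J hk hgp hcard hIS hIcard hJB hJc hJ'B hJ'c
      hptJ.1 hptJ.2 (by rw [hpteq]; exact hptJ'.2)
  have hrhs : {J : Finset (Fin (2 * k) → ℝ) | J ⊆ S \ I ∧ J.card = k + 1 ∧
      (convexHull ℝ (I : Set (Fin (2 * k) → ℝ)) ∩
        convexHull ℝ (J : Set (Fin (2 * k) → ℝ))).Nonempty} = ↑good := by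
    ext J
    simp only [Set.mem_setOf_eq, hgood, Finset.coe_filter, Finset.mem_powersetCard]
    tauto
  constructor
  · rw [hset]; exact (good.image pt).finite_toSet
  · rw [hset, hrhs, Set.ncard_coe_finset, Set.ncard_coe_finset,
      Finset.card_image_of_injOn hinj]
end
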